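/- arXiv:2205.07445 — 2 statements merged into one kernel-verified Lean document; each statement's English description precedes it below -/
import Mathlib

section
/- Let N be a positive integer, let z, w : ZMod N → ℂ be signals (indices taken modulo N), let L be an integer with 0 < L < N, and let k, m be integers. Set ω = exp(2πi·L/N). Then the short-time Fourier transform measurement admits the frequency-domain representation: Σ_{n=0}^{N−1} z_n · w_{mL−n} · exp(−2πi·k·n/N) = (1/N) · Σ_{l=0}^{N−1} ẑ_{k+l} · ŵ_l · ω^{l·m}, where all subscripts of z, w, ẑ, ŵ are taken modulo N. -/
open Complex

/-- Discrete Fourier transform of a signal indexed by `ZMod N`. -/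
noncomputable def dft {N : ℕ} (z : ZMod N → ℂ) (k : ZMod N) : ℂ :=
  ∑ n ∈ Finset.range N, z n *
    Complex.exp (-2 * (Real.pi : ℂ) * Complex.I * (k.val : ℂ) * (n : ℂ) / N)

/-- Short-time Fourier transform measurement `ŷ^w_{k,m}(z)` with window `w` and
separation parameter `L`. -/
noncomputable def stft {N : ℕ} (w : ZMod N → ℂ) (L : ℤ) (z : ZMod N → ℂ) (k m : ℤ) : ℂ :=
  ∑ n ∈ Finset.range N, z n * w ((m * L - n : ℤ) : ZMod N) *
    Complex.exp (-2 * (Real.pi : ℂ) * Complex.I * (k : ℂ) * (n : ℂ) / N)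

/-- The DFT of the analytic signal associated with a real signal `x`. -/
noncomputable def analyticHat (N : ℕ) (x : ZMod N → ℝ) (k : ℕ) : ℂ :=
  if N % 2 = 0 then
    if k = 0 then dft (fun n => (x n : ℂ)) 0
    else if k ≤ N / 2 - 1 then 2 * dft (fun n => (x n : ℂ)) (k : ZMod N)
    else if k = N / 2 then dft (fun n => (x n : ℂ)) ((N / 2 : ℕ) : ZMod N)
    else 0
  else
    if k = 0 then dft (fun n => (x n : ℂ)) 0
    else if k ≤ (N - 1) / 2 then 2 * dft (fun n => (x n : ℂ)) (k : ZMod N)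
    else 0

/-- The analytic signal `A(x)` of a real signal `x`, obtained by inverse DFT. -/
noncomputable def analyticSignal {N : ℕ} (x : ZMod N → ℝ) : ZMod N → ℂ :=
  fun n => (1 / N : ℂ) * ∑ k ∈ Finset.range N, analyticHat N x k *
    Complex.exp (2 * (Real.pi : ℂ) * Complex.I * (k : ℂ) * (n.val : ℂ) / N)

/-- A signal `z ∈ ℂ^N` is analytic if `z = A(x)` for some real signal `x`. -/
def IsAnalytic {N : ℕ} (z : ZMod N → ℂ) : Prop := ∃ x : ZMod N → ℝ, z = analyticSignal x

/-! Both `dft` and `stft` are the Fourier transform on `ZMod N` (`ZMod.dft`, built on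
`ZMod.stdAddChar`) written as sums over `range N`. The STFT at `(k, m)` is the transform at `k` of
`n ↦ z n * w (c - n)` with `c = mL`; expanding `w (c - n) = N⁻¹ ∑ₗ ŵₗ ψ(l c) ψ(-l n)` by Fourier
inversion and summing over `n` first turns the `n`-sum into `ẑ (k + l)`. -/

open Finset Real
open scoped ZMod

section
variable {N : ℕ} [NeZero N]

theorem sum_range_natCast_eq_sum {M : Type*} [AddCommMonoid M] (f : ZMod N → M) :
    ∑ n ∈ range N, f n = ∑ x, f x := by
  refine sum_nbij' (↑) ZMod.val (by simp) (by simp [ZMod.val_lt]) ?_ ?_ (by simp)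
  · intro n hn
    simp [ZMod.val_natCast_of_lt (mem_range.mp hn)]
  · simp

theorem stdAddChar_neg_natCast_mul_intCast (n : ℕ) (j : ℤ) :
    ZMod.stdAddChar (-(n * j : ZMod N)) = Complex.exp (-2 * π * Complex.I * j * n / N) := by
  rw [← Int.cast_natCast, ← Int.cast_mul, ← Int.cast_neg, ZMod.stdAddChar_coe]
  congr 1
  push_cast
  ring

theorem dft_eq_zmod_dft (z : ZMod N → ℂ) (k : ZMod N) : dft z k = 𝓕 z k := by
  rw [dft, ZMod.dft_apply, ← sum_range_natCast_eq_sum]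
  refine sum_congr rfl fun n _ => ?_
  have := stdAddChar_neg_natCast_mul_intCast (N := N) n k.val
  rw [Int.cast_natCast, Int.cast_natCast, ZMod.natCast_zmod_val] at this
  rw [smul_eq_mul, this, mul_comm]

theorem stft_eq_dft (w : ZMod N → ℂ) (L : ℤ) (z : ZMod N → ℂ) (k m : ℤ) :
    stft w L z k m = 𝓕 (fun n ↦ z n * w ((m * L : ℤ) - n)) k := by
  rw [stft, ZMod.dft_apply, ← sum_range_natCast_eq_sum]
  refine sum_congr rfl fun n _ => ?_
  rw [stdAddChar_neg_natCast_mul_intCast, smul_eq_mul, mul_comm]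
  push_cast
  rfl

theorem exp_zpow_eq_stdAddChar (a j : ℤ) :
    Complex.exp (2 * π * Complex.I * a / N) ^ j = ZMod.stdAddChar ((j * a : ℤ) : ZMod N) := by
  rw [← Complex.exp_int_mul, ZMod.stdAddChar_coe]
  congr 1
  push_cast
  ring

theorem dft_mul_comp_sub (z w : ZMod N → ℂ) (c k : ZMod N) :
    𝓕 (fun n ↦ z n * w (c - n)) k =
      (N : ℂ)⁻¹ * ∑ l, 𝓕 z (k + l) * 𝓕 w l * ZMod.stdAddChar (l * c) := by
  have hw : ∀ x, w x = (N : ℂ)⁻¹ * ∑ l, ZMod.stdAddChar (l * x) * 𝓕 w l := fun x => by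
    simpa [ZMod.invDFT_apply] using (congrFun (ZMod.dft.symm_apply_apply w) x).symm
  -- `hw` mentions `w` on its right side; freezing `𝓕 w` keeps `simp` from looping on it.
  set W := 𝓕 w
  simp only [ZMod.dft_apply, hw, smul_eq_mul, mul_sum, sum_mul]
  rw [sum_comm]
  refine sum_congr rfl fun l _ => sum_congr rfl fun n _ => ?_
  rw [show -(n * (k + l)) = -(n * k) + -(l * n) by ring,
    show l * (c - n) = l * c + -(l * n) by ring, AddChar.map_add_eq_mul, AddChar.map_add_eq_mul]
  ring

end

theorem stft_frequency_domain_general (N : ℕ) (hN : 0 < N) (z w : ZMod N → ℂ)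
    (L : ℤ) (k m : ℤ) :
    stft w L z k m = (1 / N : ℂ) * ∑ l ∈ Finset.range N,
      dft z ((k : ZMod N) + (l : ZMod N)) * dft w (l : ZMod N) *
        Complex.exp (2 * (Real.pi : ℂ) * Complex.I * (L : ℂ) / N) ^ ((l : ℤ) * m) := by
  have : NeZero N := NeZero.of_pos hN
  rw [stft_eq_dft, dft_mul_comp_sub, one_div, ← sum_range_natCast_eq_sum]
  congr 1
  refine sum_congr rfl fun l _ => ?_
  rw [dft_eq_zmod_dft, dft_eq_zmod_dft, exp_zpow_eq_stdAddChar]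
  push_cast
  simp only [mul_assoc]

/-- frequency-domain representation of the STFT measurement. -/
theorem stft_frequency_domain (N : ℕ) (hN : 0 < N) (z w : ZMod N → ℂ)
    (L : ℤ) (hL0 : 0 < L) (hLN : L < (N : ℤ)) (k m : ℤ) :
    stft w L z k m = (1 / N : ℂ) * ∑ l ∈ Finset.range N,
      dft z ((k : ZMod N) + (l : ZMod N)) * dft w (l : ZMod N) *
        Complex.exp (2 * (Real.pi : ℂ) * Complex.I * (L : ℂ) / N) ^ ((l : ℤ) * m) :=
  stft_frequency_domain_general N hN z w L k m
end

section
/- Let α, β ∈ ℂ satisfy α·β ≠ 0, α ≠ β, α·conj(β) ∉ ℝ, and |α| ≠ |β|. Then the 4×4 complex matrix M whose s-th row (s = 1, 2, 3, 4) is (|α|^{2s}, (α·conj(β))^s, (conj(α)·β)^s, |β|^{2s}) is invertible. -/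
/-!
With `v = (|α|², α·conj β, conj α·β, |β|²)`, row `s` of the matrix is `(v j ^ (s + 1))ⱼ`, so the
matrix is a transposed Vandermonde matrix of `v` times `diagonal v`. Its determinant is nonzero
because the entries of `v` are nonzero and pairwise distinct: the middle two are a non-real number
and its conjugate, the outer two are distinct reals.
-/

open Matrix ComplexConjugate

theorem Matrix.det_of_pow_succ_ne_zero_of_injective {R : Type*} [CommRing R] [IsDomain R] {n : ℕ}
    {v : Fin n → R} (hinj : Function.Injective v) (hv : ∀ i, v i ≠ 0) :
    (Matrix.of fun s j : Fin n => v j ^ ((s : ℕ) + 1)).det ≠ 0 := by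
  have hfactor : (Matrix.of fun s j : Fin n => v j ^ ((s : ℕ) + 1)) =
      (vandermonde v)ᵀ * diagonal v := by
    ext s j
    simp [pow_succ]
  rw [hfactor, det_mul, det_transpose, det_diagonal]
  exact mul_ne_zero (det_vandermonde_ne_zero_iff.mpr hinj)
    (Finset.prod_ne_zero_iff.mpr fun i _ => hv i)

theorem Complex.injective_vec_ofReal_conj_ofReal {r s : ℝ} {z : ℂ} (hrs : r ≠ s)
    (hz : z.im ≠ 0) : Function.Injective ![(r : ℂ), z, conj z, (s : ℂ)] := by
  have hz_conj : z ≠ conj z := fun h => hz (by linarith [congrArg im h, conj_im z])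
  have hz_real : ∀ t : ℝ, z ≠ t := fun t h => hz (by simp [h])
  have hconj_real : ∀ t : ℝ, conj z ≠ t := fun t h => hz (by simpa using congrArg im h)
  intro i j h
  fin_cases i <;> fin_cases j <;> simp_all [eq_comm]

theorem power_matrix_invertible_general (α β : ℂ) (h0 : α * β ≠ 0)
    (hnr : (α * (starRingEnd ℂ) β).im ≠ 0)
    (habs : ‖α‖ ≠ ‖β‖) :
    (Matrix.of fun s j : Fin 4 =>
      ![((‖α‖ : ℂ)) ^ (2 * ((s : ℕ) + 1)),
        (α * (starRingEnd ℂ) β) ^ ((s : ℕ) + 1),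
        ((starRingEnd ℂ) α * β) ^ ((s : ℕ) + 1),
        ((‖β‖ : ℂ)) ^ (2 * ((s : ℕ) + 1))] j).det ≠ 0 := by
  obtain ⟨hα, hβ⟩ := mul_ne_zero_iff.mp h0
  have hsq : ‖α‖ ^ 2 ≠ ‖β‖ ^ 2 := (sq_eq_sq₀ (norm_nonneg α) (norm_nonneg β)).not.mpr habs
  set v := ![((‖α‖ ^ 2 : ℝ) : ℂ), α * conj β, conj (α * conj β), ((‖β‖ ^ 2 : ℝ) : ℂ)]
  have hv : ∀ i, v i ≠ 0 := by
    intro i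
    fin_cases i <;> simp [v, hα, hβ]
  convert det_of_pow_succ_ne_zero_of_injective
    (Complex.injective_vec_ofReal_conj_ofReal hsq hnr) hv using 3
  ext s j
  fin_cases j <;> simp [pow_mul]

/-- invertibility of the 4×4 matrix built from powers of
`|α|²`, `α·conj β`, `conj α·β`, `|β|²`. -/
theorem power_matrix_invertible (α β : ℂ) (h0 : α * β ≠ 0) (hne : α ≠ β)
    (hnr : (α * (starRingEnd ℂ) β).im ≠ 0)
    (habs : ‖α‖ ≠ ‖β‖) :
    (Matrix.of fun s j : Fin 4 =>
      ![((‖α‖ : ℂ)) ^ (2 * ((s : ℕ) + 1)),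
        (α * (starRingEnd ℂ) β) ^ ((s : ℕ) + 1),
        ((starRingEnd ℂ) α * β) ^ ((s : ℕ) + 1),
        ((‖β‖ : ℂ)) ^ (2 * ((s : ℕ) + 1))] j).det ≠ 0 :=
  power_matrix_invertible_general α β h0 hnr habs
end
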